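/- arXiv:2102.09705 — 2 statements merged into one kernel-verified Lean document; each statement's English description precedes it below -/
import Mathlib

section
/- Let θ₁, θ₂, … be a sequence of real numbers and y_n ~ N(θ_n, 1) independent. For each N ≥ 3, let Y_N = (y₁,…,y_N), τ²_N := N^{-1} Σ_{n=1}^N θ_n², and τ̂²_N := ‖Y_N‖²/(N−2) − 1. If the sequence τ²₁, τ²₂, … is bounded, then the sequence √N (τ̂²_N − τ²_N) is bounded in probability: for every ε > 0 there exists M < ∞ such that for all sufficiently large N, P[ √N |τ̂²_N − τ²_N| > M ] < ε. -/
open MeasureTheory ProbabilityTheory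

noncomputable section

/-- The law of `Y_N = (y₁,…,y_N)` with `y_n ~ N(θ_n, 1)` independent. -/
def obsLaw (θ : ℕ → ℝ) (N : ℕ) : Measure (Fin N → ℝ) :=
  Measure.pi fun n => gaussianReal (θ n) 1

/-- `τ²_N := N⁻¹ ∑_{n<N} θ_n²`. -/
def tau2 (θ : ℕ → ℝ) (N : ℕ) : ℝ := (∑ n : Fin N, θ n ^ 2) / N

/-- The James–Stein prior-variance estimate `τ̂²_N := ‖Y_N‖²/(N−2) − 1`. -/
def tauHat2 {N : ℕ} (y : Fin N → ℝ) : ℝ := (∑ n, y n ^ 2) / ((N : ℝ) - 2) - 1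

open scoped NNReal

/-! The sum of squares `S = ‖Y_N‖²` has mean `N (τ²_N + 1)` and variance `N (4 τ²_N + κ)`,
where `κ = Var[Z²]` for a standard Gaussian `Z`. Since
`τ̂²_N - τ²_N = (S - 𝔼 S) / (N - 2) + 2 (τ²_N + 1) / (N - 2)`, `√N` times the bias is
`O(N^{-1/2})`, and Chebyshev's inequality bounds `√N (S - 𝔼 S) / (N - 2)` in probability
uniformly in `N` as long as `τ²_N` stays bounded. -/

namespace ProbabilityTheory

variable {μ : ℝ} {v : ℝ≥0}

lemma memLp_sq_gaussianReal : MemLp (fun x : ℝ ↦ x ^ 2) 2 (gaussianReal μ v) := by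
  refine (memLp_two_iff_integrable_sq (by fun_prop)).2 ?_
  have := (memLp_id_gaussianReal (μ := μ) (v := v) 4).integrable_norm_pow (by norm_num)
  simpa [← pow_mul, (by decide : Even 4).pow_abs] using this

lemma integral_sq_gaussianReal : ∫ x, x ^ 2 ∂gaussianReal μ v = μ ^ 2 + v := by
  have h := variance_eq_sub (memLp_id_gaussianReal' (μ := μ) (v := v) 2 (by simp))
  simp only [variance_id_gaussianReal, id_eq, Pi.pow_apply] at h
  rw [integral_id_gaussianReal] at h
  linarith

/-- The centred Gaussian is invariant under `x ↦ -x`, which flips the sign of this covariance. -/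
lemma covariance_sq_id_gaussianReal_zero :
    cov[fun x ↦ x ^ 2, fun x ↦ x; gaussianReal 0 v] = 0 := by
  have h := covariance_map_fun (μ := gaussianReal 0 v) (X := fun x : ℝ ↦ x ^ 2) (Y := fun x ↦ x)
    (Z := fun x ↦ -x) (by fun_prop) (by fun_prop) (by fun_prop)
  rw [gaussianReal_map_neg, neg_zero] at h
  rw [show (fun x : ℝ ↦ (-x) ^ 2) = fun x ↦ x ^ 2 by simp,
    show (fun x : ℝ ↦ -x) = -fun x ↦ x from rfl, covariance_neg_right] at h
  linarith

lemma variance_sq_gaussianReal :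
    Var[fun x ↦ x ^ 2; gaussianReal μ v] =
      4 * μ ^ 2 * v + Var[fun x ↦ x ^ 2; gaussianReal 0 v] := by
  have hmap : (gaussianReal 0 v).map (· + μ) = gaussianReal μ v := by
    simpa using gaussianReal_map_add_const (μ := 0) (v := v) μ
  rw [← hmap, variance_map (by fun_prop) (by fun_prop)]
  have hexpand : (fun x : ℝ ↦ x ^ 2) ∘ (· + μ) = fun x ↦ (x ^ 2 + 2 * μ * x) + μ ^ 2 := by
    ext; simp; ring
  have hlin : MemLp (fun x : ℝ ↦ 2 * μ * x) 2 (gaussianReal 0 v) :=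
    (memLp_id_gaussianReal' 2 (by simp)).const_mul _
  rw [hexpand, variance_add_const (by fun_prop), variance_fun_add memLp_sq_gaussianReal hlin,
    covariance_const_mul_right, covariance_sq_id_gaussianReal_zero, variance_const_mul,
    variance_fun_id_gaussianReal]
  ring

section Pi

variable {ι : Type*} [Fintype ι] (m : ι → ℝ) (v : ℝ≥0)

lemma integral_sum_sq_pi_gaussianReal :
    ∫ y, ∑ i, y i ^ 2 ∂Measure.pi (fun i ↦ gaussianReal (m i) v) = ∑ i, (m i ^ 2 + v) := by
  rw [integral_finsetSum _ fun i _ ↦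
    integrable_comp_eval (f := fun x ↦ x ^ 2) (memLp_sq_gaussianReal.integrable one_le_two)]
  refine Finset.sum_congr rfl fun i _ ↦ ?_
  rw [integral_comp_eval (f := fun x ↦ x ^ 2) (by fun_prop), integral_sq_gaussianReal]

lemma variance_sum_sq_pi_gaussianReal :
    Var[fun y ↦ ∑ i, y i ^ 2; Measure.pi fun i ↦ gaussianReal (m i) v] =
      ∑ i, (4 * m i ^ 2 * v + Var[fun x ↦ x ^ 2; gaussianReal 0 v]) := by
  have hsum : (fun y : ι → ℝ ↦ ∑ i, y i ^ 2) = ∑ i, fun y ↦ y i ^ 2 := by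
    ext y; simp
  rw [hsum, variance_sum_pi fun i ↦ memLp_sq_gaussianReal]
  exact Finset.sum_congr rfl fun i _ ↦ variance_sq_gaussianReal

end Pi

end ProbabilityTheory

instance (θ : ℕ → ℝ) (N : ℕ) : IsProbabilityMeasure (obsLaw θ N) := by
  unfold obsLaw; infer_instance

lemma tau2_nonneg (θ : ℕ → ℝ) (N : ℕ) : 0 ≤ tau2 θ N := by
  unfold tau2; positivity

lemma cast_sub_two_pos {N : ℕ} (hN : 3 ≤ N) : (0 : ℝ) < N - 2 := by
  have : (3 : ℝ) ≤ N := by exact_mod_cast hN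
  linarith

lemma memLp_sum_sq_obsLaw (θ : ℕ → ℝ) (N : ℕ) :
    MemLp (fun y : Fin N → ℝ ↦ ∑ n, y n ^ 2) 2 (obsLaw θ N) :=
  memLp_finsetSum _ fun n _ ↦
    memLp_sq_gaussianReal.comp_measurePreserving (measurePreserving_eval _ n)

lemma integral_sum_sq_obsLaw (θ : ℕ → ℝ) (N : ℕ) :
    ∫ y, ∑ n, y n ^ 2 ∂obsLaw θ N = N * (tau2 θ N + 1) := by
  rw [obsLaw, integral_sum_sq_pi_gaussianReal, Finset.sum_add_distrib, tau2]
  rcases N.eq_zero_or_pos with rfl | hN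
  · simp
  · field_simp; simp

lemma variance_sum_sq_obsLaw (θ : ℕ → ℝ) (N : ℕ) :
    Var[fun y ↦ ∑ n, y n ^ 2; obsLaw θ N] =
      N * (4 * tau2 θ N + Var[fun x ↦ x ^ 2; gaussianReal 0 1]) := by
  rw [obsLaw, variance_sum_sq_pi_gaussianReal, Finset.sum_add_distrib, tau2, ← Finset.sum_mul,
    ← Finset.mul_sum]
  rcases N.eq_zero_or_pos with rfl | hN
  · simp
  · field_simp; simp

lemma obsLaw_le_sqrt_mul_abs_sum_sq_sub_le (θ : ℕ → ℝ) {N : ℕ} (hN : 3 ≤ N) {c : ℝ}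
    (hc : 0 < c) :
    obsLaw θ N {y | c ≤ Real.sqrt N * |((∑ n, y n ^ 2) - N * (tau2 θ N + 1)) / (N - 2)|} ≤
      ENNReal.ofReal ((N / (N - 2)) ^ 2 *
        (4 * tau2 θ N + Var[fun x ↦ x ^ 2; gaussianReal 0 1]) / c ^ 2) := by
  have hN2 := cast_sub_two_pos hN
  set a := Real.sqrt N / (N - 2)
  have hmean : ∫ y, a * ∑ n, y n ^ 2 ∂obsLaw θ N = a * (N * (tau2 θ N + 1)) := by
    rw [integral_const_mul, integral_sum_sq_obsLaw]
  have hvar : Var[fun y ↦ a * ∑ n, y n ^ 2; obsLaw θ N] =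
      (N / (N - 2)) ^ 2 * (4 * tau2 θ N + Var[fun x ↦ x ^ 2; gaussianReal 0 1]) := by
    rw [variance_const_mul, variance_sum_sq_obsLaw, div_pow, Real.sq_sqrt (Nat.cast_nonneg N)]
    field_simp
  convert meas_ge_le_variance_div_sq ((memLp_sum_sq_obsLaw θ N).const_mul a) hc using 4
  · rw [hmean, ← mul_sub, abs_mul, abs_of_nonneg (div_nonneg (Real.sqrt_nonneg _) hN2.le),
      abs_div, abs_of_pos hN2]
    ring_nf
  · rw [hvar]

lemma tauHat2_sub_tau2 (θ : ℕ → ℝ) {N : ℕ} (hN : 3 ≤ N) (y : Fin N → ℝ) :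
    tauHat2 y - tau2 θ N =
      ((∑ n, y n ^ 2) - N * (tau2 θ N + 1)) / (N - 2) + 2 * (tau2 θ N + 1) / (N - 2) := by
  have := (cast_sub_two_pos hN).ne'
  rw [tauHat2]
  field_simp
  ring

lemma sqrt_mul_abs_tauHat2_sub_tau2_le (θ : ℕ → ℝ) {N : ℕ} (hN : 3 ≤ N) (y : Fin N → ℝ) :
    Real.sqrt N * |tauHat2 y - tau2 θ N| ≤
      Real.sqrt N * |((∑ n, y n ^ 2) - N * (tau2 θ N + 1)) / (N - 2)| +
        2 * (tau2 θ N + 1) * Real.sqrt N / (N - 2) := by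
  have hbias : 0 ≤ 2 * (tau2 θ N + 1) / (N - 2) := by
    have := tau2_nonneg θ N
    have := cast_sub_two_pos hN
    positivity
  rw [tauHat2_sub_tau2 θ hN]
  calc _ ≤ Real.sqrt N * (|((∑ n, y n ^ 2) - N * (tau2 θ N + 1)) / (N - 2)| +
          |2 * (tau2 θ N + 1) / (N - 2)|) :=
        mul_le_mul_of_nonneg_left (abs_add_le _ _) (Real.sqrt_nonneg _)
    _ = _ := by rw [abs_of_nonneg hbias]; ring

lemma mul_sqrt_div_sub_two_le_one {K x : ℝ} (hK : 0 ≤ K) (hx : (K + 2) ^ 2 ≤ x) :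
    K * Real.sqrt x / (x - 2) ≤ 1 := by
  have hsqrt : K + 2 ≤ Real.sqrt x := Real.le_sqrt_of_sq_le hx
  have hx' : Real.sqrt x ^ 2 = x := Real.sq_sqrt (by nlinarith)
  rw [div_le_one (by nlinarith)]
  nlinarith

lemma div_sub_two_sq_le_four {x : ℝ} (hx : 4 ≤ x) : (x / (x - 2)) ^ 2 ≤ 4 := by
  have h : x / (x - 2) ≤ 2 := by rw [div_le_iff₀ (by linarith)]; linarith
  have h0 : 0 ≤ x / (x - 2) := div_nonneg (by linarith) (by linarith)
  nlinarith

lemma obsLaw_lt_sqrt_mul_abs_tauHat2_sub_tau2_le (θ : ℕ → ℝ) {B : ℝ}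
    (hB : ∀ N, tau2 θ N ≤ B) {N : ℕ} (hN : (2 * (B + 1) + 2) ^ 2 ≤ (N : ℝ)) {c : ℝ} (hc : 0 < c) :
    obsLaw θ N {y | c + 1 < Real.sqrt N * |tauHat2 y - tau2 θ N|} ≤
      ENNReal.ofReal (4 * (4 * B + Var[fun x ↦ x ^ 2; gaussianReal 0 1]) / c ^ 2) := by
  have hτ := tau2_nonneg θ N
  have hB0 : 0 ≤ B := hτ.trans (hB N)
  have hN4 : (4 : ℝ) ≤ N := by nlinarith
  have hN3 : 3 ≤ N := by exact_mod_cast (show (3 : ℝ) ≤ N by linarith)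
  have hbias : 2 * (tau2 θ N + 1) * Real.sqrt N / (N - 2) ≤ 1 := by
    refine le_trans ?_ (mul_sqrt_div_sub_two_le_one (by positivity) hN)
    gcongr
    · linarith
    · exact hB N
  have hsub : {y : Fin N → ℝ | c + 1 < Real.sqrt N * |tauHat2 y - tau2 θ N|} ⊆
      {y | c ≤ Real.sqrt N * |((∑ n, y n ^ 2) - N * (tau2 θ N + 1)) / (N - 2)|} := fun y hy ↦ by
    have := sqrt_mul_abs_tauHat2_sub_tau2_le θ hN3 y
    simp only [Set.mem_ofPred_eq] at hy ⊢
    linarith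
  refine (measure_mono hsub).trans <|
    (obsLaw_le_sqrt_mul_abs_sum_sq_sub_le θ hN3 hc).trans (ENNReal.ofReal_le_ofReal ?_)
  have := variance_nonneg (fun x : ℝ ↦ x ^ 2) (gaussianReal 0 1)
  gcongr ?_ / _
  exact mul_le_mul (div_sub_two_sq_le_four hN4) (by linarith [hB N]) (by positivity) (by norm_num)

/-- **Lemma S6.** If the sequence `τ²_N` is bounded, then `√N (τ̂²_N − τ²_N)` is
bounded in probability: for every `ε > 0` there exists `M < ∞` such that for all
sufficiently large `N`, `P[√N |τ̂²_N − τ²_N| > M] < ε`. -/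
theorem prior_variance_estimate_convergence (θ : ℕ → ℝ)
    (hbdd : ∃ B : ℝ, ∀ N, tau2 θ N ≤ B) :
    ∀ ε > (0 : ℝ), ∃ M : ℝ, ∃ N₀ : ℕ, ∀ N ≥ N₀,
      obsLaw θ N {y | M < Real.sqrt N * |tauHat2 y - tau2 θ N|} <
        ENNReal.ofReal ε := by
  intro ε hε
  obtain ⟨B, hB⟩ := hbdd
  set V := 4 * (4 * B + Var[fun x ↦ x ^ 2; gaussianReal 0 1])
  have hV : 0 ≤ V := by
    have := (tau2_nonneg θ 0).trans (hB 0)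
    have := variance_nonneg (fun x : ℝ ↦ x ^ 2) (gaussianReal 0 1)
    positivity
  set c := V / ε + 1 with hc_def
  have hc : 0 < c := by positivity
  have hVc : V / c ^ 2 < ε := by
    have hεc : ε * c = V + ε := by rw [hc_def]; field_simp
    rw [div_lt_iff₀ (by positivity)]
    nlinarith
  refine ⟨c + 1, ⌈(2 * (B + 1) + 2) ^ 2⌉₊, fun N hN ↦ ?_⟩
  calc _ ≤ ENNReal.ofReal (V / c ^ 2) :=
        obsLaw_lt_sqrt_mul_abs_tauHat2_sub_tau2_le θ hB (Nat.ceil_le.1 hN) hc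
    _ < ENNReal.ofReal ε := (ENNReal.ofReal_lt_ofReal_iff hε).2 hVc

end
end

section
/- Let θ₁, θ₂, … be reals, y_n ~ N(θ_n, 1) independent, and for each N ≥ 3 let Y_N = (y₁,…,y_N), Θ_N = (θ₁,…,θ_N), τ²_N := N^{-1} Σ θ_n², and τ̂²_N := ‖Y_N‖²/(N−2) − 1. Define the James–Stein estimate Θ*_N := (1 − 1/(1+τ̂²_N)) Y_N, the scaled win W_N := N^{-1/2}[ ‖Y_N − Θ_N‖² − ‖Θ*_N − Θ_N‖² ], and for α ∈ [0,1] the bound b_N(Y_N, α) := N^{-1/2} { inf_{λ ∈ [0, U(Y_N,(1−α)/2)]} (2/(1+τ̂²_N)) F⁻¹_N((1−α)/2; λ/4) − λ/(2(1+τ̂²_N)) − ‖Y_N‖²/(1+τ̂²_N)² }, where U(Y_N, β) := inf{δ ≥ 0 : ‖Y_N‖² ≤ F⁻¹_N(β; δ)}. If the sequence τ²₁, τ²₂, … is bounded, then for every α ∈ (0,1), liminf_{N→∞} P[ W_N ≥ b_N(Y_N, α) ] ≥ α. -/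
open MeasureTheory ProbabilityTheory

noncomputable section

/-- Product of `n` standard Gaussians: the standard Gaussian `N(0, I_n)` on `ℝ^n`. -/
def stdGaussianPi (n : ℕ) : Measure (Fin n → ℝ) :=
  Measure.pi fun _ => gaussianReal 0 1

/-- Squared Euclidean norm on `ℝ^n`. -/
def sqNorm {n : ℕ} (v : Fin n → ℝ) : ℝ := ∑ i, (v i) ^ 2

/-- The noncentral chi-squared distribution `χ²_k(lam)`: the law of `‖Z + μ‖²` for `Z`
standard Gaussian on `ℝ^k` and `μ` any vector with `‖μ‖² = lam`. -/
def ncChiSq (k : ℕ) (lam : ℝ) : Measure ℝ :=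
  (stdGaussianPi k).map
    (fun z => ∑ i : Fin k, (z i + if i.val = 0 then Real.sqrt lam else 0) ^ 2)

/-- `F⁻¹_k(p; lam)`: the quantile function (generalized inverse CDF) of `χ²_k(lam)` at `p`. -/
def ncChiSqQuantile (k : ℕ) (lam p : ℝ) : ℝ :=
  sInf {x : ℝ | ENNReal.ofReal p ≤ ncChiSq k lam (Set.Iic x)}

/-- The scaled win `W_N = N^{-1/2} (‖Y_N − Θ_N‖² − ‖Θ*_N − Θ_N‖²)` of the shrinkage
estimate `Θ*_N = (1 − 1/(1+t)) Y_N` over the MLE, with variance parameter `t`. -/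
def jsWin (N : ℕ) (θ : ℕ → ℝ) (t : ℝ) (y : Fin N → ℝ) : ℝ :=
  (Real.sqrt N)⁻¹ *
    (sqNorm (fun n => y n - θ n) - sqNorm (fun n => (1 - 1 / (1 + t)) * y n - θ n))

/-- `U_N := inf{δ ≥ 0 : ‖Y_N‖² ≤ F⁻¹_N(β; δ)}`. -/
def jsU (N : ℕ) (y : Fin N → ℝ) (β : ℝ) : ℝ :=
  sInf {δ : ℝ | 0 ≤ δ ∧ sqNorm y ≤ ncChiSqQuantile N δ β}

/-- The scaled lower bound `b_N` on the win, with variance parameter `t`. -/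
def jsB (N : ℕ) (t α : ℝ) (y : Fin N → ℝ) : ℝ :=
  (Real.sqrt N)⁻¹ *
    sInf ((fun lam =>
        2 / (1 + t) * ncChiSqQuantile N (lam / 4) ((1 - α) / 2)
          - lam / (2 * (1 + t)) - sqNorm y / (1 + t) ^ 2) ''
      Set.Icc 0 (jsU N y ((1 - α) / 2)))

end

/-!
Write `L = ‖Θ_N‖²` and `β = (1 - α) / 2`. By rotation invariance of the standard Gaussian,
`‖Y_N‖²` and `‖Y_N - Θ_N / 2‖²` have laws `χ²_N(L)` and `χ²_N(L / 4)`, so with probability at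
least `1 - 2β = α` both exceed their `β`-quantiles, the first one strictly (the laws have no
atoms). The `χ²_N(λ)` quantile increases with `λ`: after Fubini along the first coordinate this is
the fact that a Gaussian window `[-s - r, -s + r]` loses mass as `s ≥ 0` grows. Hence on the first
event `L` lies in the interval `[0, U]` over which `b_N` takes its infimum. Expanding the squares,
`√N W_N = 2c ‖Y_N - Θ_N / 2‖² - c L / 2 - c² ‖Y_N‖²` with `c = 1 / (1 + τ̂²_N) ≥ 0`, so on the
second event `√N W_N` dominates the expression inside `b_N` at `λ = L`. This gives
`P[W_N ≥ b_N] ≥ α` for every `N ≥ 2`.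
-/

open Set Filter Topology
open scoped NNReal ENNReal

lemma gaussianPDFReal_le_of_abs_sub_le {μ : ℝ} {v : ℝ≥0} {x y : ℝ} (h : |x - μ| ≤ |y - μ|) :
    gaussianPDFReal μ v y ≤ gaussianPDFReal μ v x := by
  have hsq : (x - μ) ^ 2 ≤ (y - μ) ^ 2 := sq_le_sq.2 h
  simp only [gaussianPDFReal]
  gcongr

lemma gaussianReal_Icc_neg_sub_neg_add_le {v : ℝ≥0} (hv : v ≠ 0) {r s s' : ℝ} (hr : 0 ≤ r)
    (hs : 0 ≤ s) (hss' : s ≤ s') :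
    gaussianReal 0 v (Icc (-s' - r) (-s' + r)) ≤ gaussianReal 0 v (Icc (-s - r) (-s + r)) := by
  have hint : ∀ a b, IntervalIntegrable (gaussianPDFReal 0 v) volume a b := fun a b =>
    (integrable_gaussianPDFReal 0 v).intervalIntegrable
  have hIcc : ∀ a b, a ≤ b →
      gaussianReal 0 v (Icc a b) = ENNReal.ofReal (∫ x in a..b, gaussianPDFReal 0 v x) := by
    intro a b hab
    rw [gaussianReal_apply_eq_integral 0 hv, integral_Icc_eq_integral_Ioc,
      intervalIntegral.integral_of_le hab]
  have hshift : ∫ x in -s' + r..-s + r, gaussianPDFReal 0 v (x - 2 * r)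
      = ∫ x in -s' - r..-s - r, gaussianPDFReal 0 v x := by
    rw [intervalIntegral.integral_comp_sub_right]; ring_nf
  rw [hIcc _ _ (by linarith), hIcc _ _ (by linarith)]
  refine ENNReal.ofReal_le_ofReal (sub_nonpos.1 ?_)
  -- moving the window left trades mass near the origin for its translate by `2 r` outwards
  rw [intervalIntegral.integral_interval_sub_interval_comm (hint _ _) (hint _ _) (hint _ _),
    ← hshift, sub_nonpos]
  refine intervalIntegral.integral_mono_on (by linarith)
    ((integrable_gaussianPDFReal 0 v).comp_sub_right _).intervalIntegrable (hint _ _)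
    fun x hx => gaussianPDFReal_le_of_abs_sub_le ?_
  rw [sub_zero, sub_zero, ← sq_le_sq]
  nlinarith [hx.2]

lemma setOf_add_sq_le_eq_Icc {s u : ℝ} (hu : 0 ≤ u) :
    {a : ℝ | (a + s) ^ 2 ≤ u} = Icc (-s - √u) (-s + √u) := by
  ext a
  simp only [mem_ofPred_eq, mem_Icc, Real.sq_le hu]
  constructor <;> rintro ⟨h₁, h₂⟩ <;> constructor <;> linarith

lemma gaussianReal_setOf_add_sq_le_antitone {v : ℝ≥0} (hv : v ≠ 0) {s s' : ℝ} (hs : 0 ≤ s)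
    (hss' : s ≤ s') (u : ℝ) :
    gaussianReal 0 v {a | (a + s') ^ 2 ≤ u} ≤ gaussianReal 0 v {a | (a + s) ^ 2 ≤ u} := by
  rcases lt_or_ge u 0 with hu | hu
  · have : {a : ℝ | (a + s') ^ 2 ≤ u} = ∅ :=
      eq_empty_of_forall_notMem fun a ha => (sq_nonneg (a + s')).not_gt (ha.trans_lt hu)
    simp [this]
  · rw [setOf_add_sq_le_eq_Icc hu, setOf_add_sq_le_eq_Icc hu]
    exact gaussianReal_Icc_neg_sub_neg_add_le hv (Real.sqrt_nonneg u) hs hss'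

lemma sqNorm_nonneg {n : ℕ} (v : Fin n → ℝ) : 0 ≤ sqNorm v :=
  Finset.sum_nonneg fun i _ => sq_nonneg (v i)

@[fun_prop]
lemma measurable_sqNorm (n : ℕ) : Measurable (sqNorm (n := n)) := by
  unfold sqNorm; fun_prop

instance (n : ℕ) : IsProbabilityMeasure (stdGaussianPi n) := by
  unfold stdGaussianPi; infer_instance

instance (k : ℕ) (lam : ℝ) : IsProbabilityMeasure (ncChiSq k lam) :=
  Measure.isProbabilityMeasure_map (Measurable.aemeasurable (by fun_prop))

instance inst_s17 (θ : ℕ → ℝ) (N : ℕ) : IsProbabilityMeasure (obsLaw θ N) := by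
  unfold obsLaw; infer_instance

lemma ncChiSq_succ_eq_map (n : ℕ) (lam : ℝ) :
    ncChiSq (n + 1) lam = ((gaussianReal 0 1).prod (stdGaussianPi n)).map
      (fun p => (p.1 + √lam) ^ 2 + sqNorm p.2) := by
  simp only [ncChiSq, stdGaussianPi]
  rw [← (measurePreserving_piFinSuccAbove (fun _ => gaussianReal 0 1) 0).map_eq,
    Measure.map_map (by fun_prop) (by fun_prop)]
  congr 1
  funext z
  simp [Fin.sum_univ_succ, sqNorm, Fin.tail]

lemma ncChiSq_succ_apply (n : ℕ) (lam : ℝ) {A : Set ℝ} (hA : MeasurableSet A) :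
    ncChiSq (n + 1) lam A =
      ∫⁻ r, gaussianReal 0 1 {a | (a + √lam) ^ 2 + sqNorm r ∈ A} ∂stdGaussianPi n := by
  rw [ncChiSq_succ_eq_map, Measure.map_apply (by fun_prop) hA,
    Measure.prod_apply_symm ((by fun_prop : Measurable _) hA)]
  rfl

lemma ncChiSq_Iic_antitone (n : ℕ) {lam lam' : ℝ} (h : lam ≤ lam') (x : ℝ) :
    ncChiSq (n + 1) lam' (Iic x) ≤ ncChiSq (n + 1) lam (Iic x) := by
  rw [ncChiSq_succ_apply _ _ measurableSet_Iic, ncChiSq_succ_apply _ _ measurableSet_Iic]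
  refine lintegral_mono fun r => ?_
  simp only [mem_Iic, ← le_sub_iff_add_le]
  exact gaussianReal_setOf_add_sq_le_antitone one_ne_zero (Real.sqrt_nonneg _)
    (Real.sqrt_le_sqrt h) _

instance (n : ℕ) (lam : ℝ) : NullSingletonClass (ncChiSq (n + 1) lam) where
  measure_singleton c := by
    have hfin (r : Fin n → ℝ) :
        {a | (a + √lam) ^ 2 + sqNorm r ∈ ({c} : Set ℝ)} ⊆
          {√(c - sqNorm r) - √lam, -√(c - sqNorm r) - √lam} := by
      intro a ha
      simp only [mem_ofPred_eq, mem_singleton_iff] at ha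
      have : (a + √lam) ^ 2 = √(c - sqNorm r) ^ 2 := by
        rw [Real.sq_sqrt (by nlinarith)]; linarith
      simp only [mem_insert_iff, mem_singleton_iff]
      rcases sq_eq_sq_iff_eq_or_eq_neg.1 this with h | h
      · left; linarith
      · right; linarith
    rw [ncChiSq_succ_apply _ _ (measurableSet_singleton c)]
    refine (lintegral_congr fun r => ?_).trans lintegral_zero
    exact measure_mono_null (hfin r) (gaussianReal_absolutelyContinuous 0 one_ne_zero
      ((toFinite _).measure_zero volume))

lemma ncChiSq_Iic_le_gaussianReal_Iic (n : ℕ) (lam x : ℝ) :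
    ncChiSq (n + 1) lam (Iic x) ≤ gaussianReal 0 1 (Iic (√x - √lam)) := by
  rw [ncChiSq_succ_apply _ _ measurableSet_Iic]
  calc _ ≤ ∫⁻ _, gaussianReal 0 1 (Iic (√x - √lam)) ∂stdGaussianPi n :=
        lintegral_mono fun r => measure_mono fun a ha => ?_
    _ = _ := by simp
  have hsq : (a + √lam) ^ 2 ≤ x := by
    have := sqNorm_nonneg r
    simp only [mem_ofPred_eq, mem_Iic] at ha
    linarith
  simp only [mem_Iic]
  linarith [Real.le_sqrt_of_sq_le hsq]

lemma tendsto_ncChiSq_Iic_atTop (n : ℕ) (x : ℝ) :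
    Tendsto (fun lam => ncChiSq (n + 1) lam (Iic x)) atTop (𝓝 0) := by
  have hcdf : Tendsto (fun lam => gaussianReal 0 1 (Iic (√x - √lam))) atTop (𝓝 0) := by
    simp_rw [← ofReal_cdf]
    rw [← ENNReal.ofReal_zero]
    exact ENNReal.tendsto_ofReal ((tendsto_cdf_atBot _).comp
      (tendsto_atBot_add_const_left _ _ (tendsto_neg_atTop_atBot.comp Real.tendsto_sqrt_atTop)))
  exact tendsto_of_tendsto_of_tendsto_of_le_of_le tendsto_const_nhds hcdf (fun _ => zero_le)
    (ncChiSq_Iic_le_gaussianReal_Iic n · x)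

lemma measure_Iio_le_of_forall_lt {μ : Measure ℝ} {q : ℝ} {c : ℝ≥0∞}
    (h : ∀ x < q, μ (Iic x) ≤ c) : μ (Iio q) ≤ c := by
  obtain ⟨u, hu_mono, hu_lt, hu_lim⟩ := exists_seq_strictMono_tendsto q
  have hIio : Iio q = ⋃ m, Iic (u m) := by
    refine Subset.antisymm (fun y hy => ?_) (iUnion_subset fun m => Iic_subset_Iio.2 (hu_lt m))
    obtain ⟨m, hm⟩ := (hu_lim.eventually (lt_mem_nhds hy)).exists
    exact mem_iUnion.2 ⟨m, hm.le⟩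
  rw [hIio, Monotone.measure_iUnion fun a b hab => Iic_subset_Iic.2 (hu_mono.monotone hab)]
  exact iSup_le fun m => h _ (hu_lt m)

lemma ncChiSq_Iio_zero (k : ℕ) (lam : ℝ) : ncChiSq k lam (Iio 0) = 0 := by
  rw [ncChiSq, Measure.map_apply (by fun_prop) measurableSet_Iio]
  convert measure_empty (μ := stdGaussianPi k)
  ext z
  simp only [mem_preimage, mem_Iio, mem_empty_iff_false, iff_false, not_lt]
  positivity

section Quantile

variable {k : ℕ} {lam p : ℝ}

lemma nonneg_of_ofReal_le_ncChiSq_Iic (hp : 0 < p) {x : ℝ}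
    (hx : ENNReal.ofReal p ≤ ncChiSq k lam (Iic x)) : 0 ≤ x := by
  by_contra! hx0
  have : ncChiSq k lam (Iic x) = 0 :=
    measure_mono_null (Iic_subset_Iio.2 hx0) (ncChiSq_Iio_zero k lam)
  exact (ENNReal.ofReal_pos.2 hp).not_ge (hx.trans this.le)

lemma ncChiSqQuantile_nonneg (hp : 0 < p) : 0 ≤ ncChiSqQuantile k lam p :=
  Real.sInf_nonneg fun _ => nonneg_of_ofReal_le_ncChiSq_Iic hp

lemma bddBelow_ncChiSqQuantile_set (hp : 0 < p) :
    BddBelow {x | ENNReal.ofReal p ≤ ncChiSq k lam (Iic x)} :=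
  ⟨0, fun _ => nonneg_of_ofReal_le_ncChiSq_Iic hp⟩

lemma ncChiSq_Iic_lt_of_lt_ncChiSqQuantile (hp : 0 < p) {x : ℝ}
    (hx : x < ncChiSqQuantile k lam p) : ncChiSq k lam (Iic x) < ENNReal.ofReal p :=
  not_le.1 fun h => (csInf_le (bddBelow_ncChiSqQuantile_set hp) h).not_gt hx

lemma ncChiSq_Iio_ncChiSqQuantile_le (hp : 0 < p) :
    ncChiSq k lam (Iio (ncChiSqQuantile k lam p)) ≤ ENNReal.ofReal p :=
  measure_Iio_le_of_forall_lt fun _ hx => (ncChiSq_Iic_lt_of_lt_ncChiSqQuantile hp hx).le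

lemma ncChiSq_Iic_ncChiSqQuantile_le {n : ℕ} (hp : 0 < p) :
    ncChiSq (n + 1) lam (Iic (ncChiSqQuantile (n + 1) lam p)) ≤ ENNReal.ofReal p := by
  rw [← measure_congr Iio_ae_eq_Iic]
  exact ncChiSq_Iio_ncChiSqQuantile_le hp

lemma ncChiSqQuantile_set_nonempty (hp : p < 1) :
    {x | ENNReal.ofReal p ≤ ncChiSq k lam (Iic x)}.Nonempty := by
  have h := tendsto_measure_Iic_atTop (ncChiSq k lam)
  rw [measure_univ] at h
  exact (h.eventually_const_le (ENNReal.ofReal_lt_one.2 hp)).exists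

lemma ncChiSqQuantile_mono {n : ℕ} (hp₀ : 0 < p) (hp₁ : p < 1) :
    Monotone fun lam => ncChiSqQuantile (n + 1) lam p := fun _ _ h =>
  csInf_le_csInf (bddBelow_ncChiSqQuantile_set hp₀) (ncChiSqQuantile_set_nonempty hp₁)
    fun x hx => hx.trans (ncChiSq_Iic_antitone n h x)

lemma exists_le_ncChiSqQuantile {n : ℕ} (hp₀ : 0 < p) (hp₁ : p < 1) (M : ℝ) :
    ∃ δ, 0 ≤ δ ∧ M ≤ ncChiSqQuantile (n + 1) δ p := by
  obtain ⟨δ, hδ, hδ₀⟩ := (((tendsto_ncChiSq_Iic_atTop n M).eventually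
    (gt_mem_nhds (ENNReal.ofReal_pos.2 hp₀))).and (eventually_ge_atTop 0)).exists
  refine ⟨δ, hδ₀, le_csInf (ncChiSqQuantile_set_nonempty hp₁) fun x hx => ?_⟩
  by_contra! hxM
  exact (hx.trans (measure_mono (Iic_subset_Iic.2 hxM.le))).not_gt hδ

end Quantile

lemma le_jsU_of_ncChiSqQuantile_lt {n : ℕ} {y : Fin (n + 1) → ℝ} {β lam : ℝ} (hβ₀ : 0 < β)
    (hβ₁ : β < 1) (h : ncChiSqQuantile (n + 1) lam β < sqNorm y) : lam ≤ jsU (n + 1) y β := by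
  obtain ⟨δ, hδ₀, hδ⟩ := exists_le_ncChiSqQuantile (n := n) hβ₀ hβ₁ (sqNorm y)
  refine le_csInf ⟨δ, hδ₀, hδ⟩ fun δ' ⟨_, hδ'⟩ => ?_
  by_contra! hlt
  exact (hδ'.trans (ncChiSqQuantile_mono hβ₀ hβ₁ hlt.le)).not_gt h

lemma stdGaussian_map_norm_add_sq_eq_of_norm_eq {E : Type*} [NormedAddCommGroup E]
    [InnerProductSpace ℝ E] [FiniteDimensional ℝ E] [MeasurableSpace E] [BorelSpace E] {m m' : E}
    (h : ‖m‖ = ‖m'‖) :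
    (stdGaussian E).map (fun w => ‖w + m‖ ^ 2) = (stdGaussian E).map (fun w => ‖w + m'‖ ^ 2) := by
  set T := (ℝ ∙ (m - m'))ᗮ.reflection
  have hT : (fun w => ‖w + m‖ ^ 2) = (fun w => ‖w + m'‖ ^ 2) ∘ T := by
    funext w
    rw [Function.comp_apply, ← Submodule.reflection_sub h, ← map_add, T.norm_map]
  rw [hT, ← Measure.map_map (by fun_prop) T.continuous.measurable, stdGaussian_map]

lemma stdGaussianPi_map_sqNorm_add_eq_of_sqNorm_eq {n : ℕ} {μ μ' : Fin n → ℝ}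
    (h : sqNorm μ = sqNorm μ') :
    (stdGaussianPi n).map (fun z => sqNorm (z + μ)) =
      (stdGaussianPi n).map (fun z => sqNorm (z + μ')) := by
  have hmap (v : Fin n → ℝ) : (stdGaussianPi n).map (fun z => sqNorm (z + v)) =
      (stdGaussian (EuclideanSpace ℝ (Fin n))).map (fun w => ‖w + WithLp.toLp 2 v‖ ^ 2) := by
    rw [← map_pi_eq_stdGaussian, Measure.map_map (by fun_prop) (by fun_prop)]
    congr 1
    funext z
    simp [EuclideanSpace.real_norm_sq_eq, sqNorm]
  have hnorm : ‖WithLp.toLp 2 μ‖ = ‖WithLp.toLp 2 μ'‖ := by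
    rw [← sq_eq_sq₀ (norm_nonneg _) (norm_nonneg _), EuclideanSpace.real_norm_sq_eq,
      EuclideanSpace.real_norm_sq_eq]
    exact h
  rw [hmap, hmap, stdGaussian_map_norm_add_sq_eq_of_norm_eq hnorm]

lemma ncChiSq_sqNorm_eq_map {k : ℕ} (μ : Fin k → ℝ) :
    ncChiSq k (sqNorm μ) = (stdGaussianPi k).map (fun z => sqNorm (z + μ)) := by
  have hfirst : sqNorm (fun i : Fin k => if i.val = 0 then √(sqNorm μ) else 0) = sqNorm μ := by
    cases k with
    | zero => simp [sqNorm]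
    | succ n =>
      have h₀ := sqNorm_nonneg μ
      generalize sqNorm μ = L at h₀ ⊢
      simp [sqNorm, Real.sq_sqrt h₀]
  exact stdGaussianPi_map_sqNorm_add_eq_of_sqNorm_eq hfirst

lemma obsLaw_eq_map (θ : ℕ → ℝ) (N : ℕ) :
    obsLaw θ N = (stdGaussianPi N).map (fun (z : Fin N → ℝ) (n : Fin N) => z n + θ n) := by
  rw [stdGaussianPi, obsLaw, Measure.pi_map_pi fun _ => measurable_add_const _ |>.aemeasurable]
  simp_rw [gaussianReal_map_add_const, zero_add]

lemma obsLaw_map_sqNorm_sub (θ : ℕ → ℝ) {N : ℕ} (c : Fin N → ℝ) :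
    (obsLaw θ N).map (fun y => sqNorm (y - c)) = ncChiSq N (sqNorm fun n => θ n - c n) := by
  rw [obsLaw_eq_map, Measure.map_map (by fun_prop) (by fun_prop), ncChiSq_sqNorm_eq_map]
  congr 1
  funext z
  simp [sqNorm, add_sub_assoc]

lemma one_sub_add_le_measure_compl_inter {Ω : Type*} [MeasurableSpace Ω] (μ : Measure Ω)
    [IsProbabilityMeasure μ] (s t : Set Ω) : 1 - (μ s + μ t) ≤ μ (sᶜ ∩ tᶜ) := by
  rw [tsub_le_iff_right, ← compl_union]
  calc 1 = μ ((s ∪ t)ᶜ ∪ (s ∪ t)) := by rw [compl_union_self, measure_univ]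
    _ ≤ μ (s ∪ t)ᶜ + (μ s + μ t) :=
      (measure_union_le _ _).trans (add_le_add le_rfl (measure_union_le _ _))

lemma sqNorm_sub_sub_sqNorm_mul_sub {N : ℕ} (y ϑ : Fin N → ℝ) (c : ℝ) :
    sqNorm (fun n => y n - ϑ n) - sqNorm (fun n => (1 - c) * y n - ϑ n) =
      2 * c * sqNorm (fun n => y n - ϑ n / 2) - c * sqNorm ϑ / 2 - c ^ 2 * sqNorm y := by
  simp only [sqNorm, Finset.mul_sum, Finset.sum_div, ← Finset.sum_sub_distrib]
  exact Finset.sum_congr rfl fun n _ => by ring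

lemma one_add_tauHat2_nonneg {N : ℕ} (hN : 2 ≤ N) (y : Fin N → ℝ) : 0 ≤ 1 + tauHat2 y := by
  have : (2 : ℝ) ≤ N := by exact_mod_cast hN
  rw [tauHat2, add_sub_cancel]
  exact div_nonneg (by positivity) (by linarith)

lemma jsB_le {N : ℕ} {t α : ℝ} (ht : 0 ≤ 1 + t) (hα : α < 1) {y : Fin N → ℝ} {lam : ℝ}
    (hlam : lam ∈ Icc 0 (jsU N y ((1 - α) / 2))) :
    jsB N t α y ≤ (√N)⁻¹ * (2 / (1 + t) * ncChiSqQuantile N (lam / 4) ((1 - α) / 2)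
      - lam / (2 * (1 + t)) - sqNorm y / (1 + t) ^ 2) := by
  refine mul_le_mul_of_nonneg_left (csInf_le ?_ ⟨lam, hlam, rfl⟩) (by positivity)
  refine ⟨-(jsU N y ((1 - α) / 2) / (2 * (1 + t))) - sqNorm y / (1 + t) ^ 2, ?_⟩
  rintro _ ⟨l, ⟨-, hl⟩, rfl⟩
  have hq : 0 ≤ 2 / (1 + t) * ncChiSqQuantile N (l / 4) ((1 - α) / 2) :=
    mul_nonneg (by positivity) (ncChiSqQuantile_nonneg (by linarith))
  have hlU : l / (2 * (1 + t)) ≤ jsU N y ((1 - α) / 2) / (2 * (1 + t)) := by gcongr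
  linarith

lemma jsB_le_jsWin {n : ℕ} (θ : ℕ → ℝ) {t α : ℝ} (ht : 0 ≤ 1 + t) (hα : α ∈ Ioo (-1) 1)
    {y : Fin (n + 1) → ℝ}
    (h₁ : ncChiSqQuantile (n + 1) (sqNorm fun i : Fin (n + 1) => θ i) ((1 - α) / 2) < sqNorm y)
    (h₂ : ncChiSqQuantile (n + 1) ((sqNorm fun i : Fin (n + 1) => θ i) / 4) ((1 - α) / 2) ≤
      sqNorm fun i => y i - θ i / 2) :
    jsB (n + 1) t α y ≤ jsWin (n + 1) θ t y := by
  set L := sqNorm fun i : Fin (n + 1) => θ i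
  have hL : L ∈ Icc 0 (jsU (n + 1) y ((1 - α) / 2)) :=
    ⟨sqNorm_nonneg _, le_jsU_of_ncChiSqQuantile_lt (by linarith [hα.2]) (by linarith [hα.1]) h₁⟩
  refine (jsB_le ht hα.2 hL).trans (mul_le_mul_of_nonneg_left ?_ (by positivity))
  rw [sqNorm_sub_sub_sqNorm_mul_sub]
  generalize 1 + t = u at ht ⊢
  calc _ = 2 * (1 / u) * ncChiSqQuantile (n + 1) (L / 4) ((1 - α) / 2) - 1 / u * L / 2
        - (1 / u) ^ 2 * sqNorm y := by ring
    _ ≤ _ := by gcongr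

theorem ofReal_le_obsLaw_jsB_le_jsWin (θ : ℕ → ℝ) {n : ℕ} (t : (Fin (n + 1) → ℝ) → ℝ)
    (ht : ∀ y, 0 ≤ 1 + t y) {α : ℝ} (hα : α ∈ Ioo (-1) 1) :
    ENNReal.ofReal α ≤ obsLaw θ (n + 1) {y | jsB (n + 1) (t y) α y ≤ jsWin (n + 1) θ (t y) y} := by
  have hβ : 0 < (1 - α) / 2 := by linarith [hα.2]
  set β := (1 - α) / 2
  set L := sqNorm fun i : Fin (n + 1) => θ i
  have hcenter : (obsLaw θ (n + 1)).map sqNorm = ncChiSq (n + 1) L := by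
    simpa using obsLaw_map_sqNorm_sub θ (0 : Fin (n + 1) → ℝ)
  have hhalf : (obsLaw θ (n + 1)).map (fun y => sqNorm (y - fun i : Fin (n + 1) => θ i / 2)) =
      ncChiSq (n + 1) (L / 4) := by
    rw [obsLaw_map_sqNorm_sub]
    congr 1
    simp only [L, sqNorm, Finset.sum_div]
    exact Finset.sum_congr rfl fun i _ => by ring
  have hbad₁ : obsLaw θ (n + 1) (sqNorm ⁻¹' Iic (ncChiSqQuantile (n + 1) L β)) ≤ .ofReal β := by
    rw [← Measure.map_apply (by fun_prop) measurableSet_Iic, hcenter]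
    exact ncChiSq_Iic_ncChiSqQuantile_le hβ
  have hbad₂ : obsLaw θ (n + 1) ((fun y => sqNorm (y - fun i : Fin (n + 1) => θ i / 2)) ⁻¹'
      Iio (ncChiSqQuantile (n + 1) (L / 4) β)) ≤ .ofReal β := by
    rw [← Measure.map_apply (by fun_prop) measurableSet_Iio, hhalf]
    exact ncChiSq_Iio_ncChiSqQuantile_le hβ
  calc ENNReal.ofReal α = 1 - (.ofReal β + .ofReal β) := by
        rw [← ENNReal.ofReal_add hβ.le hβ.le, ← ENNReal.ofReal_one,
          ← ENNReal.ofReal_sub _ (by linarith)]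
        congr 1
        simp only [β]
        ring
    _ ≤ _ := tsub_le_tsub_left (add_le_add hbad₁ hbad₂) 1
    _ ≤ _ := one_sub_add_le_measure_compl_inter _ _ _
    _ ≤ _ := measure_mono fun y ⟨hy₁, hy₂⟩ =>
        jsB_le_jsWin θ (ht y) hα (not_le.1 hy₁) (not_lt.1 hy₂)

theorem james_stein_asymptotic_coverage_general (θ : ℕ → ℝ) :
    ∀ α ∈ Set.Ioo (0 : ℝ) 1,
      ENNReal.ofReal α ≤
        Filter.atTop.liminf
          (fun N => obsLaw θ N {y | jsB N (tauHat2 y) α y ≤ jsWin N θ (tauHat2 y) y}) := by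
  intro α hα
  refine Filter.le_liminf_of_le (h := Filter.eventually_atTop.2 ⟨2, fun N hN => ?_⟩)
  obtain ⟨n, rfl⟩ := Nat.exists_eq_add_one.2 (by omega : 0 < N)
  exact ofReal_le_obsLaw_jsB_le_jsWin θ tauHat2 (one_add_tauHat2_nonneg hN)
    ⟨by linarith [hα.1], hα.2⟩

/-- **Theorem 5 (asymptotic coverage for the empirical Bayes/James–Stein bound).**
If `τ²_N = N⁻¹∑θ_n²` is bounded, then for every `α ∈ (0,1)`,
`liminf_N P[W_N ≥ b_N(Y_N, α)] ≥ α`, where the win `W_N` and the bound `b_N` are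
computed with the empirical Bayes variance estimate `τ̂²_N`. -/
theorem james_stein_asymptotic_coverage (θ : ℕ → ℝ)
    (hbdd : ∃ B : ℝ, ∀ N, tau2 θ N ≤ B) :
    ∀ α ∈ Set.Ioo (0 : ℝ) 1,
      ENNReal.ofReal α ≤
        Filter.atTop.liminf
          (fun N => obsLaw θ N {y | jsB N (tauHat2 y) α y ≤ jsWin N θ (tauHat2 y) y}) :=
  james_stein_asymptotic_coverage_general θ
end
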